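/- arXiv:2504.14230 — 2 statements merged into one kernel-verified Lean document; each statement's English description precedes it below -/
import Mathlib

section
/- The Owen value satisfies super inter-unions marginality: for any two CS-games (N, v, B) and (N, w, B) with the same coalition structure B = {B_1, …, B_m} indexed by M, and any player i ∈ B_p ∈ B, if v(Q(R) ∪ S ∪ {i}) − v(Q(R) ∪ S) = w(Q(R) ∪ S ∪ {i}) − w(Q(R) ∪ S) for all R ⊆ M \ {p} and all S ⊆ B_p \ {i}, where Q(R) = ∪_{r∈R} B_r, then Ow_i(N, v, B) = Ow_i(N, w, B). -/
open Finset

variable {ι κ : Type*}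

/-- The Harsanyi dividend of a coalition `T` in the TU-game `v`. -/
noncomputable def dividend (v : Finset ι → ℝ) (T : Finset ι) : ℝ :=
  ∑ S ∈ T.powerset, (-1 : ℝ) ^ (T.card - S.card) * v S

/-- `i` is a null player in the TU-game `v` on player set `N`. -/
def NullPlayer [DecidableEq ι] (v : Finset ι → ℝ) (N : Finset ι) (i : ι) : Prop :=
  ∀ S ⊆ N \ {i}, v (insert i S) = v S

/-- `i` is a necessary player in the TU-game `v` on player set `N`. -/
def Necessary [DecidableEq ι] (v : Finset ι → ℝ) (N : Finset ι) (i : ι) : Prop :=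
  ∀ S ⊆ N \ {i}, v S = 0

/-- `i` and `j` are mutually dependent in the TU-game `v` on player set `N`. -/
def MutDep [DecidableEq ι] (v : Finset ι → ℝ) (N : Finset ι) (i j : ι) : Prop :=
  ∀ S ⊆ N \ {i, j}, v (insert i S) - v S = 0 ∧ v (insert j S) - v S = 0

/-- `i` and `j` are symmetric players in the TU-game `v` on player set `N`. -/
def SymmPlayers [DecidableEq ι] (v : Finset ι → ℝ) (N : Finset ι) (i j : ι) : Prop :=
  ∀ S ⊆ N \ {i, j}, v (insert i S) - v S = v (insert j S) - v S

/-- Two unions `Bp` and `Bq` are highly mutually dependent in `v`. -/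
def HighlyMD [DecidableEq ι] (v : Finset ι → ℝ) (N : Finset ι) (Bp Bq : Finset ι) : Prop :=
  ∀ i ∈ Bp, ∀ j ∈ Bq, MutDep v N i j

/-- `B` (indexed by the finite index set `M`) is a coalition structure on `N`:
nonempty, pairwise disjoint unions covering `N`. -/
def IsCS [DecidableEq ι] (N : Finset ι) (M : Finset κ) (B : κ → Finset ι) : Prop :=
  (∀ p ∈ M, (B p).Nonempty) ∧
  (∀ p ∈ M, ∀ q ∈ M, p ≠ q → Disjoint (B p) (B q)) ∧
  M.biUnion B = N

/-- The quotient game `v^B` on the index set of the coalition structure. -/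
def quotientGame [DecidableEq ι] (v : Finset ι → ℝ) (B : κ → Finset ι) : Finset κ → ℝ :=
  fun R => v (R.biUnion B)

/-- The Owen value of player `i` belonging to union `B p` in the CS-game `(N, v, B)`. -/
noncomputable def Owen [DecidableEq ι] (v : Finset ι → ℝ) (N : Finset ι) (M : Finset κ)
    (B : κ → Finset ι) (p : κ) (i : ι) : ℝ :=
  ∑ T ∈ N.powerset.filter (fun T => i ∈ T),
    dividend v T / (((B p ∩ T).card : ℝ) * ((M.filter (fun q => ((B q) ∩ T).Nonempty)).card : ℝ))

/-- The Shapley value of player `i` in the TU-game `(N, v)`. -/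
noncomputable def Shapley [DecidableEq ι] (v : Finset ι → ℝ) (N : Finset ι) (i : ι) : ℝ :=
  ∑ T ∈ N.powerset.filter (fun T => i ∈ T), dividend v T / (T.card : ℝ)


/-- Reindex a sum over supersets of `A` inside `S` by the complement part. -/
lemma sum_filter_superset {α : Type*} [DecidableEq α] {S A : Finset α} (hA : A ⊆ S)
    (f : Finset α → ℝ) :
    ∑ T ∈ S.powerset.filter (fun T => A ⊆ T), f T = ∑ C ∈ (S \ A).powerset, f (A ∪ C) := by
  apply Finset.sum_nbij' (i := fun T => T \ A) (j := fun C => A ∪ C)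
  · intro T hT
    simp only [mem_filter, mem_powerset] at hT ⊢
    exact sdiff_subset_sdiff hT.1 Subset.rfl
  · intro C hC
    simp only [mem_powerset] at hC
    simp only [mem_filter, mem_powerset]
    exact ⟨union_subset hA (hC.trans sdiff_subset), subset_union_left⟩
  · intro T hT
    simp only [mem_filter, mem_powerset] at hT
    exact union_sdiff_of_subset hT.2
  · intro C hC
    simp only [mem_powerset] at hC
    exact union_sdiff_cancel_left (disjoint_sdiff.mono_right hC)
  · intro T hT
    simp only [mem_filter, mem_powerset] at hT
    rw [union_sdiff_of_subset hT.2]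

/-- coefficient `r! (n-r)! / (n+1)!` -/
noncomputable def cf (n r : ℕ) : ℝ :=
  ((Nat.factorial r * Nat.factorial (n - r) : ℕ) : ℝ) / ((Nat.factorial (n + 1) : ℕ) : ℝ)

lemma nat_coef (a k : ℕ) :
    (a + 1) * ∑ c ∈ Finset.range (k + 1), k.choose c * ((a + c).factorial * (k - c).factorial)
      = (a + k + 1).factorial := by
  have key : ∀ c ∈ Finset.range (k + 1),
      k.choose c * ((a + c).factorial * (k - c).factorial)
        = k.factorial * a.factorial * ((a + c).choose a) := by
    intro c hc
    have hck : c ≤ k := Nat.lt_succ_iff.mp (mem_range.mp hc)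
    have h1 : k.choose c * c.factorial * (k - c).factorial = k.factorial :=
      Nat.choose_mul_factorial_mul_factorial hck
    have h2 : (a + c).choose a * a.factorial * c.factorial = (a + c).factorial := by
      simpa using Nat.choose_mul_factorial_mul_factorial (Nat.le_add_right a c)
    have e1 : (k.choose c * ((a + c).factorial * (k - c).factorial)) * c.factorial
        = k.factorial * (a + c).factorial := by rw [← h1]; ring
    have e2 : (k.factorial * a.factorial * ((a + c).choose a)) * c.factorial
        = k.factorial * (a + c).factorial := by rw [← h2]; ring
    exact Nat.eq_of_mul_eq_mul_right c.factorial_pos (e1.trans e2.symm)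
  rw [Finset.sum_congr rfl key, ← Finset.mul_sum]
  have hs : ∑ c ∈ Finset.range (k + 1), (a + c).choose a = (a + k + 1).choose (a + 1) := by
    have := Nat.sum_range_add_choose k a
    simpa [add_comm, add_left_comm] using this
  rw [hs]
  have h3 : (a + k + 1).choose (a + 1) * (a + 1).factorial * k.factorial
      = (a + k + 1).factorial := by
    have h := Nat.choose_mul_factorial_mul_factorial
      (show a + 1 ≤ a + k + 1 by omega)
    simpa [show a + k + 1 - (a + 1) = k by omega] using h
  calc (a + 1) * (k.factorial * a.factorial * (a + k + 1).choose (a + 1))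
      = (a + k + 1).choose (a + 1) * ((a + 1) * a.factorial) * k.factorial := by ring
    _ = (a + k + 1).factorial := by rw [← Nat.factorial_succ]; exact h3

lemma coef_sum {α : Type*} [DecidableEq α] {X A : Finset α} (hA : A ⊆ X) :
    ∑ R ∈ X.powerset.filter (fun R => A ⊆ R), cf X.card R.card = 1 / ((A.card : ℝ) + 1) := by
  classical
  set a := A.card
  set k := (X \ A).card with hk
  have hXcard : X.card = a + k := by
    rw [hk, add_comm]
    exact (Finset.card_sdiff_add_card_eq_card hA).symm
  rw [sum_filter_superset hA (fun R => cf X.card R.card)]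
  have hcongr : ∀ C ∈ (X \ A).powerset, cf X.card (A ∪ C).card = cf (a + k) (a + C.card) := by
    intro C hC
    have hdisj : Disjoint A C :=
      Finset.disjoint_sdiff.mono_right (mem_powerset.mp hC)
    rw [card_union_of_disjoint hdisj, hXcard]
  rw [Finset.sum_congr rfl hcongr]
  -- group by cardinality
  rw [Finset.sum_powerset (X \ A) (fun C => cf (a + k) (a + C.card))]
  have hlayer : ∀ j ∈ Finset.range (k + 1),
      ∑ C ∈ Finset.powersetCard j (X \ A), cf (a + k) (a + C.card)
        = (k.choose j : ℝ) * cf (a + k) (a + j) := by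
    intro j hj
    rw [Finset.sum_congr rfl (fun C hC => by
      rw [(Finset.mem_powersetCard.mp hC).2]), Finset.sum_const,
      Finset.card_powersetCard, ← hk, nsmul_eq_mul]
  rw [← hk, Finset.sum_congr rfl hlayer]
  -- now a pure numeric identity
  have hnum : ∀ j ∈ Finset.range (k + 1),
      (k.choose j : ℝ) * cf (a + k) (a + j)
        = ((k.choose j * ((a + j).factorial * (k - j).factorial) : ℕ) : ℝ)
            / (((a + k + 1).factorial : ℕ) : ℝ) := by
    intro j hj
    have hjk : j ≤ k := Nat.lt_succ_iff.mp (mem_range.mp hj)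
    unfold cf
    rw [show a + k - (a + j) = k - j by omega]
    push_cast
    ring
  rw [Finset.sum_congr rfl hnum, ← Finset.sum_div]
  rw [div_eq_div_iff (by positivity) (by positivity), one_mul, ← Nat.cast_sum]
  have := nat_coef a k
  push_cast [← this]
  ring

/-- Möbius inversion: summing dividends over subsets recovers the game. -/
lemma sum_dividend {ι : Type*} [DecidableEq ι] (v : Finset ι → ℝ) (S : Finset ι) :
    ∑ T ∈ S.powerset, dividend v T = v S := by
  unfold dividend
  rw [Finset.sum_comm' (s' := fun U => S.powerset.filter (fun T => U ⊆ T)) (t' := S.powerset)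
    (fun T U => by
      simp only [mem_powerset, mem_filter]
      constructor
      · rintro ⟨h1, h2⟩; exact ⟨⟨h1, h2⟩, h2.trans h1⟩
      · rintro ⟨⟨h1, h2⟩, h3⟩; exact ⟨h1, h2⟩)]
  have hinner : ∀ U ∈ S.powerset,
      ∑ T ∈ S.powerset.filter (fun T => U ⊆ T), (-1 : ℝ) ^ (T.card - U.card) * v U
        = (if S \ U = ∅ then 1 else 0) * v U := by
    intro U hU
    rw [sum_filter_superset (mem_powerset.mp hU)]
    rw [Finset.sum_congr rfl (fun C hC => by
      have hd : Disjoint U C := Finset.disjoint_sdiff.mono_right (mem_powerset.mp hC)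
      rw [card_union_of_disjoint hd, Nat.add_sub_cancel_left]),
      ← Finset.sum_mul]
    have hcast : ∑ m ∈ (S \ U).powerset, (-1 : ℝ) ^ m.card
        = (((∑ m ∈ (S \ U).powerset, (-1 : ℤ) ^ m.card) : ℤ) : ℝ) := by push_cast; rfl
    rw [hcast, Finset.sum_powerset_neg_one_pow_card]
    split_ifs <;> simp
  rw [Finset.sum_congr rfl hinner]
  rw [Finset.sum_eq_single S]
  · simp
  · intro U hU hne
    rw [if_neg (fun hc => hne (Finset.Subset.antisymm (mem_powerset.mp hU)
      (Finset.sdiff_eq_empty_iff_subset.mp hc))), zero_mul]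
  · intro h; exact absurd (mem_powerset.mpr Subset.rfl) h

lemma owen_formula {ι κ : Type*} [DecidableEq ι] [DecidableEq κ]
    (N : Finset ι) (M : Finset κ) (B : κ → Finset ι) (hCS : IsCS N M B)
    (v : Finset ι → ℝ) (p : κ) (hp : p ∈ M) (i : ι) (hi : i ∈ B p) :
    Owen v N M B p i =
      ∑ R ∈ (M \ {p}).powerset, ∑ S ∈ ((B p) \ {i}).powerset,
        cf (M \ {p}).card R.card * cf ((B p) \ {i}).card S.card *
          (v (R.biUnion B ∪ S ∪ {i}) - v (R.biUnion B ∪ S)) := by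
  classical
  obtain ⟨-, hdisj, hcover⟩ := hCS
  have hBN : ∀ q ∈ M, B q ⊆ N := fun q hq => hcover ▸ Finset.subset_biUnion_of_mem B hq
  have hiN : i ∈ N := hBN p hp hi
  -- step A: marginal contributions as sums of dividends
  have stepA : ∀ R ∈ (M \ {p}).powerset, ∀ S ∈ ((B p) \ {i}).powerset,
      v (R.biUnion B ∪ S ∪ {i}) - v (R.biUnion B ∪ S)
        = ∑ T ∈ N.powerset.filter (fun T => i ∈ T),
            (if T ⊆ R.biUnion B ∪ S ∪ {i} then dividend v T else 0) := by
    intro R hR S hS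
    rw [mem_powerset] at hR hS
    set K := R.biUnion B ∪ S with hK
    have hKN : K ⊆ N := by
      apply union_subset
      · exact Finset.biUnion_subset.mpr fun r hr =>
          hBN r ((Finset.sdiff_subset) (hR hr))
      · exact (hS.trans Finset.sdiff_subset).trans (hBN p hp)
    have hiK : i ∉ K := by
      intro hc
      rcases Finset.mem_union.mp hc with hc | hc
      · obtain ⟨r, hrR, hir⟩ := Finset.mem_biUnion.mp hc
        have hrM : r ∈ M \ {p} := hR hrR
        have : r ≠ p := by
          intro he; exact (Finset.mem_sdiff.mp hrM).2 (by simp [he])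
        exact Finset.disjoint_left.mp
          (hdisj r (Finset.mem_sdiff.mp hrM).1 p hp this) hir hi
      · exact (Finset.mem_sdiff.mp (hS hc)).2 (by simp)
    have hKiN : K ∪ {i} ⊆ N := union_subset hKN (by simpa using hiN)
    rw [← sum_dividend v (K ∪ {i}), ← sum_dividend v K]
    rw [← Finset.sum_filter_add_sum_filter_not ((K ∪ {i}).powerset) (fun T => i ∈ T)]
    have hnot : (K ∪ {i}).powerset.filter (fun T => ¬ i ∈ T) = K.powerset := by
      ext T
      simp only [mem_filter, mem_powerset]
      constructor
      · rintro ⟨h1, h2⟩ x hx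
        rcases Finset.mem_union.mp (h1 hx) with h | h
        · exact h
        · exact absurd ((Finset.mem_singleton.mp h) ▸ hx) h2
      · intro hTK
        exact ⟨hTK.trans Finset.subset_union_left, fun hc => hiK (hTK hc)⟩
    rw [hnot, add_sub_cancel_right]
    have hfilt : (K ∪ {i}).powerset.filter (fun T => i ∈ T)
        = (N.powerset.filter (fun T => i ∈ T)).filter (fun T => T ⊆ K ∪ {i}) := by
      ext T
      simp only [mem_filter, mem_powerset]
      constructor
      · rintro ⟨h1, h2⟩; exact ⟨⟨h1.trans hKiN, h2⟩, h1⟩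
      · rintro ⟨⟨h1, h2⟩, h3⟩; exact ⟨h3, h2⟩
    rw [hfilt, Finset.sum_filter]
  -- rewrite RHS using step A, push constants inside
  have step2 : ∑ R ∈ (M \ {p}).powerset, ∑ S ∈ ((B p) \ {i}).powerset,
        cf (M \ {p}).card R.card * cf ((B p) \ {i}).card S.card *
          (v (R.biUnion B ∪ S ∪ {i}) - v (R.biUnion B ∪ S))
      = ∑ R ∈ (M \ {p}).powerset, ∑ S ∈ ((B p) \ {i}).powerset,
          ∑ T ∈ N.powerset.filter (fun T => i ∈ T),
            (if T ⊆ R.biUnion B ∪ S ∪ {i} then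
              cf (M \ {p}).card R.card * cf ((B p) \ {i}).card S.card * dividend v T else 0) := by
    refine Finset.sum_congr rfl fun R hR => Finset.sum_congr rfl fun S hS => ?_
    rw [stepA R hR S hS, Finset.mul_sum]
    exact Finset.sum_congr rfl fun T hT => by rw [mul_ite, mul_zero]
  rw [step2]
  rw [Finset.sum_congr rfl fun R (hR : R ∈ (M \ {p}).powerset) => Finset.sum_comm]
  rw [Finset.sum_comm]
  unfold Owen
  refine Finset.sum_congr rfl fun T hT => ?_
  rw [mem_filter, mem_powerset] at hT
  obtain ⟨hTN, hiT⟩ := hT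
  set R₀ := (M \ {p}).filter (fun q => (B q ∩ T).Nonempty) with hR₀def
  set S₀ := (B p ∩ T) \ {i} with hS₀def
  have hR₀ : R₀ ⊆ M \ {p} := Finset.filter_subset _ _
  have hS₀ : S₀ ⊆ (B p) \ {i} :=
    Finset.sdiff_subset_sdiff Finset.inter_subset_left Finset.Subset.rfl
  -- the key characterization
  have key : ∀ R ∈ (M \ {p}).powerset, ∀ S ∈ ((B p) \ {i}).powerset,
      (T ⊆ R.biUnion B ∪ S ∪ {i}) ↔ (R₀ ⊆ R ∧ S₀ ⊆ S) := by
    intro R hR S hS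
    rw [mem_powerset] at hR hS
    constructor
    · intro hsub
      constructor
      · intro q hq
        rw [hR₀def, mem_filter] at hq
        obtain ⟨hqMp, x, hx⟩ := hq
        have hxq : x ∈ B q := (Finset.mem_inter.mp hx).1
        have hxT : x ∈ T := (Finset.mem_inter.mp hx).2
        have hqM : q ∈ M := (Finset.mem_sdiff.mp hqMp).1
        have hqp : q ≠ p := fun he => (Finset.mem_sdiff.mp hqMp).2 (by simp [he])
        rcases Finset.mem_union.mp (hsub hxT) with h | h
        · rcases Finset.mem_union.mp h with h | h
          · obtain ⟨r, hrR, hxr⟩ := Finset.mem_biUnion.mp h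
            have hrM : r ∈ M := (Finset.mem_sdiff.mp (hR hrR)).1
            by_cases hqr : q = r
            · exact hqr ▸ hrR
            · exact absurd hxr (Finset.disjoint_left.mp (hdisj q hqM r hrM hqr) hxq)
          · have hxBp : x ∈ B p := (Finset.mem_sdiff.mp (hS h)).1
            exact absurd hxBp (Finset.disjoint_left.mp (hdisj q hqM p hp hqp) hxq)
        · rw [Finset.mem_singleton] at h
          exact absurd (h ▸ hxq) (Finset.disjoint_left.mp (hdisj q hqM p hp hqp) · hi)
      · intro x hx
        rw [hS₀def, Finset.mem_sdiff, Finset.mem_inter] at hx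
        obtain ⟨⟨hxBp, hxT⟩, hxi⟩ := hx
        rcases Finset.mem_union.mp (hsub hxT) with h | h
        · rcases Finset.mem_union.mp h with h | h
          · obtain ⟨r, hrR, hxr⟩ := Finset.mem_biUnion.mp h
            have hrMp := Finset.mem_sdiff.mp (hR hrR)
            have hrp : r ≠ p := fun he => hrMp.2 (by simp [he])
            exact absurd hxBp (Finset.disjoint_left.mp (hdisj r hrMp.1 p hp hrp) hxr)
          · exact h
        · exact absurd h hxi
    · rintro ⟨hRR, hSS⟩ x hxT
      have hxN : x ∈ N := hTN hxT
      rw [← hcover] at hxN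
      obtain ⟨q, hqM, hxq⟩ := Finset.mem_biUnion.mp hxN
      by_cases hqp : q = p
      · by_cases hxi : x = i
        · exact Finset.mem_union_right _ (by simp [hxi])
        · refine Finset.mem_union_left _ (Finset.mem_union_right _ (hSS ?_))
          rw [hS₀def, Finset.mem_sdiff, Finset.mem_inter]
          exact ⟨⟨hqp ▸ hxq, hxT⟩, by simpa using hxi⟩
      · refine Finset.mem_union_left _ (Finset.mem_union_left _ ?_)
        refine Finset.mem_biUnion.mpr ⟨q, hRR ?_, hxq⟩
        rw [hR₀def, mem_filter, Finset.mem_sdiff]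
        exact ⟨⟨hqM, by simpa using hqp⟩, ⟨x, Finset.mem_inter.mpr ⟨hxq, hxT⟩⟩⟩
  -- rewrite conditions and factor the double sum
  have step3 : ∑ R ∈ (M \ {p}).powerset, ∑ S ∈ ((B p) \ {i}).powerset,
        (if T ⊆ R.biUnion B ∪ S ∪ {i} then
          cf (M \ {p}).card R.card * cf ((B p) \ {i}).card S.card * dividend v T else 0)
      = ∑ R ∈ (M \ {p}).powerset,
          (if R₀ ⊆ R then cf (M \ {p}).card R.card *
            (dividend v T * (1 / ((S₀.card : ℝ) + 1))) else 0) := by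
    refine Finset.sum_congr rfl fun R hR => ?_
    rw [Finset.sum_congr rfl fun S hS => if_congr (key R hR S hS) rfl rfl]
    by_cases hRR : R₀ ⊆ R
    · simp only [hRR, true_and, if_pos]
      have : ∀ S ∈ ((B p) \ {i}).powerset,
          (if S₀ ⊆ S then
            cf (M \ {p}).card R.card * cf ((B p) \ {i}).card S.card * dividend v T else 0)
          = cf (M \ {p}).card R.card * dividend v T *
              (if S₀ ⊆ S then cf ((B p) \ {i}).card S.card else 0) := by
        intro S hS
        rw [mul_ite, mul_zero]
        exact if_congr Iff.rfl (by ring) rfl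
      rw [Finset.sum_congr rfl this, ← Finset.mul_sum, ← Finset.sum_filter, coef_sum hS₀]
      ring
    · simp only [hRR, false_and, if_false, if_neg hRR, Finset.sum_const_zero]
  rw [step3]
  have step4 : ∀ R ∈ (M \ {p}).powerset,
      (if R₀ ⊆ R then cf (M \ {p}).card R.card *
        (dividend v T * (1 / ((S₀.card : ℝ) + 1))) else 0)
      = (dividend v T * (1 / ((S₀.card : ℝ) + 1))) *
          (if R₀ ⊆ R then cf (M \ {p}).card R.card else 0) := by
    intro R hR
    rw [mul_ite, mul_zero]
    exact if_congr Iff.rfl (by ring) rfl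
  rw [Finset.sum_congr rfl step4, ← Finset.mul_sum, ← Finset.sum_filter, coef_sum hR₀]
  -- cardinalities
  have hc1 : (B p ∩ T).card = S₀.card + 1 := by
    have hiBT : {i} ⊆ B p ∩ T := by simp [Finset.mem_inter.mpr ⟨hi, hiT⟩]
    have := Finset.card_sdiff_add_card_eq_card hiBT
    simp only [Finset.card_singleton] at this
    rw [hS₀def]; omega
  have hc2 : (M.filter (fun q => (B q ∩ T).Nonempty)).card = R₀.card + 1 := by
    have hfe : M.filter (fun q => (B q ∩ T).Nonempty) = insert p R₀ := by
      ext q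
      rw [hR₀def, Finset.mem_insert, mem_filter, mem_filter, Finset.mem_sdiff]
      constructor
      · rintro ⟨hqM, hqne⟩
        by_cases hqp : q = p
        · exact Or.inl hqp
        · exact Or.inr ⟨⟨hqM, by simpa using hqp⟩, hqne⟩
      · rintro (hqp | ⟨⟨hqM, -⟩, hqne⟩)
        · exact ⟨hqp ▸ hp, hqp ▸ ⟨i, Finset.mem_inter.mpr ⟨hi, hiT⟩⟩⟩
        · exact ⟨hqM, hqne⟩
    rw [hfe, Finset.card_insert_of_notMem
      (fun hc => by simpa using (Finset.mem_sdiff.mp (hR₀ hc)).2)]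
  rw [hc1, hc2]
  push_cast
  rw [div_eq_mul_inv, mul_inv]
  ring

/-- The Owen value satisfies super inter-unions marginality. -/
theorem owen_IUM {ι κ : Type*} [DecidableEq ι] [DecidableEq κ]
    (N : Finset ι) (M : Finset κ) (B : κ → Finset ι) (hCS : IsCS N M B)
    (v w : Finset ι → ℝ) (hv : v ∅ = 0) (hw : w ∅ = 0)
    (p : κ) (hp : p ∈ M) (i : ι) (hi : i ∈ B p)
    (h : ∀ R ⊆ M \ {p}, ∀ S ⊆ (B p) \ {i},
      v (R.biUnion B ∪ S ∪ {i}) - v (R.biUnion B ∪ S) =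
        w (R.biUnion B ∪ S ∪ {i}) - w (R.biUnion B ∪ S)) :
    Owen v N M B p i = Owen w N M B p i := by

  rw [owen_formula N M B hCS v p hp i hi, owen_formula N M B hCS w p hp i hi]
  refine Finset.sum_congr rfl fun R hR => Finset.sum_congr rfl fun S hS => ?_
  rw [h R (Finset.mem_powerset.mp hR) S (Finset.mem_powerset.mp hS)]
end

section
/- The Owen value satisfies differential marginality of inter-mutually dependent unions: for any two CS-games (N, v, B) and (N, w, B) with the same coalition structure and any two unions B_p, B_q ∈ B, if B_p and B_q are highly mutually dependent in the difference game v − w, then Σ_{i ∈ B_p} Ow_i(N, v, B) − Σ_{i ∈ B_p} Ow_i(N, w, B) = Σ_{i ∈ B_q} Ow_i(N, v, B) − Σ_{i ∈ B_q} Ow_i(N, w, B). -/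
open Finset

variable {ι κ : Type*}

private lemma dividend_sub {ι : Type*} (v w : Finset ι → ℝ) (T : Finset ι) :
    dividend (fun S => v S - w S) T = dividend v T - dividend w T := by
  simp [dividend, mul_sub, Finset.sum_sub_distrib]

private lemma dividend_null {ι : Type*} [DecidableEq ι] (u : Finset ι → ℝ) (N : Finset ι)
    (T : Finset ι) (hT : T ⊆ N) (i j : ι) (hi : i ∈ T) (hj : j ∉ T)
    (hnull : ∀ S ⊆ N \ {i, j}, u (insert i S) = u S) :
    dividend u T = 0 := by
  have hiT : i ∉ T.erase i := notMem_erase i T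
  rw [dividend, show T.powerset = (insert i (T.erase i)).powerset by rw [insert_erase hi],
    Finset.sum_powerset_insert hiT, ← Finset.sum_add_distrib]
  apply Finset.sum_eq_zero
  intro S hS
  rw [mem_powerset] at hS
  have hiS : i ∉ S := fun hx => hiT (hS hx)
  have hST : S ⊆ T := hS.trans (erase_subset i T)
  have hjS : j ∉ S := fun hx => hj (hST hx)
  have hSN : S ⊆ N \ {i, j} := by
    intro x hx
    simp only [mem_sdiff, mem_insert, mem_singleton]
    exact ⟨hT (hST hx), by rintro (rfl | rfl) <;> [exact hiS hx; exact hjS hx]⟩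
  have hu := hnull S hSN
  have hcard : (insert i S).card = S.card + 1 := card_insert_of_notMem hiS
  have hlt : S.card < T.card := card_lt_card ⟨hST, fun hTS => hiS (hTS hi)⟩
  have hexp : T.card - S.card = (T.card - (S.card + 1)) + 1 := by omega
  rw [hu, hcard, hexp, pow_succ]
  ring

/-- The Owen value satisfies differential marginality of
inter-mutually dependent unions. -/
theorem owen_DMUmd {ι κ : Type*} [DecidableEq ι] [DecidableEq κ]
    (N : Finset ι) (M : Finset κ) (B : κ → Finset ι) (hCS : IsCS N M B)
    (v w : Finset ι → ℝ) (hv : v ∅ = 0) (hw : w ∅ = 0)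
    (p q : κ) (hp : p ∈ M) (hq : q ∈ M)
    (h : HighlyMD (fun S => v S - w S) N (B p) (B q)) :
    ∑ i ∈ B p, Owen v N M B p i - ∑ i ∈ B p, Owen w N M B p i =
      ∑ i ∈ B q, Owen v N M B q i - ∑ i ∈ B q, Owen w N M B q i := by
  classical
  set u : Finset ι → ℝ := fun S => v S - w S with hu
  obtain ⟨hne, hdisj, hcover⟩ := hCS
  have hBpN : B p ⊆ N := hcover ▸ subset_biUnion_of_mem B hp
  have hBqN : B q ⊆ N := hcover ▸ subset_biUnion_of_mem B hq
  have hsub : ∀ r ∈ M, ∀ (Br : Finset ι),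
      ∑ i ∈ Br, Owen v N M B r i - ∑ i ∈ Br, Owen w N M B r i =
      ∑ i ∈ Br, Owen u N M B r i := by
    intro r _ Br
    rw [← Finset.sum_sub_distrib]
    refine Finset.sum_congr rfl fun i _ => ?_
    rw [Owen, Owen, Owen, ← Finset.sum_sub_distrib]
    refine Finset.sum_congr rfl fun T _ => ?_
    rw [div_sub_div_same, ← dividend_sub]
  rw [hsub p hp (B p), hsub q hq (B q)]
  have key : ∀ r : κ, ∀ Br : Finset ι,
      ∑ i ∈ Br, Owen u N M B r i =
      ∑ T ∈ N.powerset, ((Br ∩ T).card : ℝ) *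
        (dividend u T / (((B r ∩ T).card : ℝ) *
          ((M.filter (fun s => ((B s) ∩ T).Nonempty)).card : ℝ))) := by
    intro r Br
    simp only [Owen, Finset.sum_filter]
    rw [Finset.sum_comm]
    refine Finset.sum_congr rfl fun T _ => ?_
    rw [← Finset.sum_filter, Finset.sum_const, filter_mem_eq_inter]
    simp [nsmul_eq_mul]
  rw [key p (B p), key q (B q)]
  refine Finset.sum_congr rfl fun T hT => ?_
  rw [mem_powerset] at hT
  by_cases hd : dividend u T = 0
  · simp [hd]
  · -- both intersections nonempty or both empty
    by_cases hpT : (B p ∩ T).Nonempty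
    · have hqT : (B q ∩ T).Nonempty := by
        by_contra hqe
        obtain ⟨i, hi⟩ := hpT
        rw [mem_inter] at hi
        obtain ⟨j, hj⟩ := hne q hq
        have hjT : j ∉ T := fun hx => hqe ⟨j, mem_inter.mpr ⟨hj, hx⟩⟩
        exact hd (dividend_null u N T hT i j hi.2 hjT
          (fun S hS => sub_eq_zero.mp ((h i hi.1 j hj S hS).1)))
      have ha : ((B p ∩ T).card : ℝ) ≠ 0 := Nat.cast_ne_zero.mpr (card_ne_zero.mpr hpT)
      have hb : ((B q ∩ T).card : ℝ) ≠ 0 := Nat.cast_ne_zero.mpr (card_ne_zero.mpr hqT)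
      rw [mul_div_assoc', mul_div_assoc', mul_div_mul_left _ _ ha, mul_div_mul_left _ _ hb]
    · have hqT : ¬ (B q ∩ T).Nonempty := by
        intro hqT
        obtain ⟨j, hj⟩ := hqT
        rw [mem_inter] at hj
        obtain ⟨i, hi⟩ := hne p hp
        have hiT : i ∉ T := fun hx => hpT ⟨i, mem_inter.mpr ⟨hi, hx⟩⟩
        refine hd (dividend_null u N T hT j i hj.2 hiT (fun S hS => ?_))
        have : S ⊆ N \ {i, j} := by rwa [pair_comm] at hS
        exact sub_eq_zero.mp ((h i hi j hj.1 S this).2)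
      rw [not_nonempty_iff_eq_empty] at hpT hqT
      simp [hpT, hqT]
end
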